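/- arXiv:1204.1574 — 2 statements merged into one kernel-verified Lean document; each statement's English description precedes it below -/
import Mathlib

section
/- Let p be an odd prime, let n ≥ 1, and let a₁, a₂, …, a_n be positive integers with T := a₁ + a₂ + ⋯ + a_n ≤ 2(p−1). Consider the rational number S := Σ_{j=0}^{p−1} [ Π_{i=1}^{n} (j+1)_{a_i} ] · [ j · Σ_{i=1}^{n} ( H^{(1)}_{a_i + j} − H^{(1)}_{j} ) + (j²/2) · ( ( Σ_{i=1}^{n} ( H^{(1)}_{a_i + j} − H^{(1)}_{j} ) )² − Σ_{i=1}^{n} ( H^{(2)}_{a_i + j} − H^{(2)}_{j} ) ) ]. Viewed in ℚ_p, S ∈ pℤ_p if T < 2(p−1), and S + 1 ∈ pℤ_p if T = 2(p−1). -/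
/-!
With `f = ∏ᵢ (X + 1)(X + 2)⋯(X + aᵢ) ∈ ℤ[X]`, the harmonic sums in the `j`-th summand are the
logarithmic derivatives of `f` at `j`, so that summand is `j f'(j) + j² f''(j) / 2`. This is the
value at `j` of `G = X · ∂⁽²⁾(X f)` (`∂⁽²⁾` the second Hasse derivative), whose `k`-th coefficient
is `C(k+1, 2) cₖ` for `f = ∑ cₖ Xᵏ`; hence `S = ∑_{j<p} G(j)` is an integer. Modulo `p`, the power
sum `∑_{x ∈ 𝔽_p} xᵏ` vanishes unless `k` is a positive multiple of `p - 1`, where it is `-1`. As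
`deg G ≤ T ≤ 2(p - 1)`, only `k = p - 1` and `k = 2(p - 1)` contribute; the first drops out because
`p ∣ C(p, 2)` for odd `p`, and the second gives `-C(2p - 1, 2) c_{2(p-1)} ≡ -c_{2(p-1)}`, where
`c_{2(p-1)}` is `1` if `T = 2(p - 1)` (`f` is monic of degree `T`) and `0` otherwise.
-/

/-- The generalized harmonic sum `H⁽ⁱ⁾_n = ∑_{j=1}^{n} 1/jⁱ`. -/
def harmonic' (i n : ℕ) : ℚ := ∑ j ∈ Finset.Icc 1 n, 1 / (j : ℚ) ^ i

/-- The rising factorial `(a)ₖ = a(a+1)⋯(a+k-1)` in `ℚ`. -/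
def risingFacQ (a : ℚ) (k : ℕ) : ℚ := ∏ t ∈ Finset.range k, (a + t)

open Polynomial Finset

namespace Polynomial

section ProdXAddC

variable {K ι : Type*} [Field K] [DecidableEq ι] {s : Finset ι} {b : ι → K} {z : K}

theorem eval_derivative_prod_X_add_C (hz : ∀ x ∈ s, z + b x ≠ 0) :
    (derivative (∏ x ∈ s, (X + C (b x)))).eval z
      = (∏ x ∈ s, (z + b x)) * ∑ x ∈ s, (z + b x)⁻¹ := by
  simp only [derivative_prod_finset, derivative_add, derivative_X, derivative_C, add_zero,
    mul_one, eval_finsetSum, eval_prod, eval_add, eval_X, eval_C, mul_sum]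
  refine sum_congr rfl fun x hx => ?_
  rw [eq_mul_inv_iff_mul_eq₀ (hz x hx), prod_erase_mul _ _ hx]

theorem eval_derivative_derivative_prod_X_add_C (hz : ∀ x ∈ s, z + b x ≠ 0) :
    (derivative (derivative (∏ x ∈ s, (X + C (b x))))).eval z
      = (∏ x ∈ s, (z + b x)) * ((∑ x ∈ s, (z + b x)⁻¹) ^ 2 - ∑ x ∈ s, (z + b x)⁻¹ ^ 2) := by
  have hterm : ∀ x ∈ s, (derivative (∏ y ∈ s.erase x, (X + C (b y)))).eval z
      = (∏ y ∈ s, (z + b y)) * ((z + b x)⁻¹ * ∑ y ∈ s, (z + b y)⁻¹ - (z + b x)⁻¹ ^ 2) := by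
    intro x hx
    have hprod : ∏ y ∈ s.erase x, (z + b y) = (∏ y ∈ s, (z + b y)) * (z + b x)⁻¹ := by
      rw [eq_mul_inv_iff_mul_eq₀ (hz x hx), prod_erase_mul _ _ hx]
    rw [eval_derivative_prod_X_add_C fun y hy => hz y (mem_of_mem_erase hy), hprod,
      sum_erase_eq_sub hx]
    ring
  rw [derivative_prod_finset]
  simp only [derivative_add, derivative_X, derivative_C, add_zero, mul_one]
  rw [derivative_sum, eval_finsetSum, sum_congr rfl hterm, ← mul_sum, sum_sub_distrib, ← sum_mul]
  ring

end ProdXAddC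

theorem hasseDeriv_map {R S : Type*} [Semiring R] [Semiring S] (φ : R →+* S) (k : ℕ)
    (f : R[X]) : hasseDeriv k (f.map φ) = (hasseDeriv k f).map φ := by
  ext n
  simp [hasseDeriv_coeff]

theorem two_mul_eval_hasseDeriv_two {R : Type*} [CommRing R] (f : R[X]) (z : R) :
    2 * (hasseDeriv 2 f).eval z = (derivative (derivative f)).eval z := by
  have h := congrFun (factorial_smul_hasseDeriv (R := R) (k := 2)) f
  rw [Nat.factorial_two, LinearMap.smul_apply, Function.iterate_succ_apply,
    Function.iterate_one] at h
  rw [← h, two_smul, eval_add, two_mul]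

theorem coeff_X_mul_hasseDeriv_two_X_mul {R : Type*} [Semiring R] (f : R[X]) (k : ℕ) :
    (X * hasseDeriv 2 (X * f)).coeff k = (k + 1).choose 2 * f.coeff k := by
  rcases k with _ | k
  · simp
  · rw [coeff_X_mul, hasseDeriv_coeff, show k + 2 = k + 1 + 1 by ring, coeff_X_mul]

theorem natDegree_X_mul_hasseDeriv_two_X_mul_le {R : Type*} [Semiring R] (f : R[X]) :
    (X * hasseDeriv 2 (X * f)).natDegree ≤ f.natDegree := by
  refine natDegree_le_iff_coeff_eq_zero.mpr fun k hk => ?_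
  rw [coeff_X_mul_hasseDeriv_two_X_mul, coeff_eq_zero_of_natDegree_lt hk, mul_zero]

end Polynomial

namespace FiniteField

variable {K : Type*} [Field K] [Fintype K]

local notation "q" => Fintype.card K

theorem sum_pow (k : ℕ) :
    ∑ x : K, x ^ k = if k ≠ 0 ∧ q - 1 ∣ k then -1 else 0 := by
  classical
  rcases eq_or_ne k 0 with rfl | hk
  · simp
  simp only [hk, ne_eq, not_false_eq_true, true_and]
  rw [← sum_pow_units]
  symm
  refine sum_bij_ne_zero (fun u _ _ => (u : K)) (fun _ _ _ => mem_univ _)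
    (fun u _ _ v _ _ h => Units.ext h) (fun x _ hx => ⟨Units.mk0 x ?_, mem_univ _, ?_, rfl⟩)
    (fun _ _ _ => rfl)
  · rintro rfl
    exact hx (zero_pow hk)
  · simpa using hx

theorem sum_eval_of_natDegree_le (f : K[X]) (hf : f.natDegree ≤ 2 * (q - 1)) :
    ∑ x, f.eval x = -(f.coeff (q - 1) + f.coeff (2 * (q - 1))) := by
  have hq : 1 ≤ q - 1 := Nat.le_sub_of_add_le Fintype.one_lt_card
  simp_rw [eval_eq_sum_range' (Nat.lt_succ_of_le hf)]
  rw [sum_comm]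
  simp_rw [← mul_sum, sum_pow]
  rw [sum_eq_add_of_mem (q - 1) (2 * (q - 1)) (mem_range.mpr (by omega))
    (mem_range.mpr (by omega)) (by omega)]
  · simp [show q - 1 ≠ 0 by omega, add_comm]
  · rintro k hk ⟨hk1, hk2⟩
    rw [if_neg, mul_zero]
    rintro ⟨hk0, m, rfl⟩
    have hm : m ≤ 2 := by
      have := mem_range.mp hk
      nlinarith
    interval_cases m <;> omega

end FiniteField

theorem ZMod.sum_range_natCast {M : Type*} [AddCommMonoid M] (p : ℕ) [NeZero p]
    (g : ZMod p → M) : ∑ j ∈ range p, g j = ∑ x, g x :=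
  sum_nbij' (fun j => (j : ZMod p)) ZMod.val (fun _ _ => mem_univ _)
    (fun x _ => mem_range.mpr (ZMod.val_lt x))
    (fun _ hj => ZMod.val_cast_of_lt (mem_range.mp hj)) (fun x _ => ZMod.natCast_zmod_val x)
    (fun _ _ => rfl)

theorem sum_range_eval_X_mul_hasseDeriv_two_X_mul (p : ℕ) [hp : Fact p.Prime] (hodd : p ≠ 2)
    (f : ℤ[X]) (hf : f.natDegree ≤ 2 * (p - 1)) :
    ((∑ j ∈ range p, (X * hasseDeriv 2 (X * f)).eval (j : ℤ) : ℤ) : ZMod p)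
      = -f.coeff (2 * (p - 1)) := by
  set g := (X * hasseDeriv 2 (X * f)).map (Int.castRingHom (ZMod p))
  have hg : g.natDegree ≤ 2 * (Fintype.card (ZMod p) - 1) := by
    rw [ZMod.card]
    exact (natDegree_map_le).trans ((natDegree_X_mul_hasseDeriv_two_X_mul_le f).trans hf)
  have hcoeff (k : ℕ) : g.coeff k = (k + 1).choose 2 * f.coeff k := by
    rw [coeff_map, coeff_X_mul_hasseDeriv_two_X_mul]
    simp
  have hp2 : (p.choose 2 : ZMod p) = 0 :=
    (ZMod.natCast_eq_zero_iff _ _).mpr (hp.out.dvd_choose_self two_ne_zero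
      (lt_of_le_of_ne hp.out.two_le (Ne.symm hodd)))
  have hp1 : ((p - 1 : ℕ) : ZMod p) = -1 := by
    rw [Nat.cast_sub hp.out.one_le, ZMod.natCast_self, Nat.cast_one, zero_sub]
  have h2p : ((2 * (p - 1) + 1).choose 2 : ZMod p) = 1 := by
    rw [Nat.choose_two_right, Nat.add_sub_cancel,
      show (2 * (p - 1) + 1) * (2 * (p - 1)) = 2 * ((2 * (p - 1) + 1) * (p - 1)) by ring,
      Nat.mul_div_cancel_left _ two_pos]
    push_cast [hp1]
    ring
  rw [Int.cast_sum]
  simp_rw [← eq_intCast (Int.castRingHom (ZMod p)), ← eval_natCast_map]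
  rw [ZMod.sum_range_natCast p (fun x => g.eval x), FiniteField.sum_eval_of_natDegree_le g hg,
    ZMod.card, hcoeff, hcoeff, Nat.sub_add_cancel hp.out.one_le, hp2, h2p]
  simp

theorem PadicInt.exists_intCast_eq_mul_of_intCast_zmod_eq_zero {p : ℕ} [Fact p.Prime] (N : ℤ)
    (h : (N : ZMod p) = 0) : ∃ z : ℤ_[p], (N : ℚ_[p]) = p * z := by
  obtain ⟨m, rfl⟩ := (ZMod.intCast_zmod_eq_zero_iff_dvd N p).mp h
  exact ⟨m, by push_cast; rfl⟩

theorem harmonic'_add_sub (i m j : ℕ) :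
    harmonic' i (m + j) - harmonic' i j = ∑ t ∈ range m, 1 / ((j + t + 1 : ℕ) : ℚ) ^ i := by
  induction m with
  | zero => simp
  | succ m ih =>
    rw [sum_range_succ, ← ih, show m + 1 + j = m + j + 1 by ring, harmonic',
      sum_Icc_succ_top (by omega), ← harmonic']
    ring_nf

section RisingFacProd

variable {n : ℕ} (a : Fin n → ℕ)

/-- `∏ᵢ (X + 1)(X + 2)⋯(X + aᵢ)`, whose value at `j` is `∏ᵢ (j + 1)_{aᵢ}`. -/
noncomputable def risingFacProd (R : Type*) [CommRing R] : R[X] :=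
  ∏ x ∈ univ.sigma fun i => range (a i), (X + C ((x.2 : R) + 1))

theorem risingFacProd_map {R S : Type*} [CommRing R] [CommRing S] (φ : R →+* S) :
    (risingFacProd a R).map φ = risingFacProd a S := by
  simp [risingFacProd, Polynomial.map_prod]

theorem risingFacProd_monic (R : Type*) [CommRing R] : (risingFacProd a R).Monic :=
  monic_prod_of_monic _ _ fun _ _ => monic_X_add_C _

theorem natDegree_risingFacProd (R : Type*) [CommRing R] [Nontrivial R] :
    (risingFacProd a R).natDegree = ∑ i, a i := by
  rw [risingFacProd, natDegree_prod_of_monic _ _ fun _ _ => monic_X_add_C _,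
    sum_congr rfl fun _ _ => natDegree_X_add_C _]
  simp

theorem summand_eq_eval_risingFacProd (j : ℕ) :
    (∏ i, risingFacQ ((j : ℚ) + 1) (a i)) *
        ((j : ℚ) * ∑ i, (harmonic' 1 (a i + j) - harmonic' 1 j)
          + (j : ℚ) ^ 2 / 2 *
            ((∑ i, (harmonic' 1 (a i + j) - harmonic' 1 j)) ^ 2
              - ∑ i, (harmonic' 2 (a i + j) - harmonic' 2 j)))
      = (X * hasseDeriv 2 (X * risingFacProd a ℚ)).eval (j : ℚ) := by
  unfold risingFacProd
  set s := univ.sigma fun i => range (a i)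
  have hz : ∀ x ∈ s, (j : ℚ) + ((x.2 : ℚ) + 1) ≠ 0 := fun _ _ => by positivity
  have hprod : ∏ i, risingFacQ ((j : ℚ) + 1) (a i) = ∏ x ∈ s, ((j : ℚ) + ((x.2 : ℚ) + 1)) := by
    rw [prod_sigma]
    refine prod_congr rfl fun i _ => prod_congr rfl fun t _ => by ring
  have hharm (m : ℕ) : ∑ i, (harmonic' m (a i + j) - harmonic' m j)
      = ∑ x ∈ s, ((j : ℚ) + ((x.2 : ℚ) + 1))⁻¹ ^ m := by
    rw [sum_sigma]
    refine sum_congr rfl fun i _ => ?_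
    rw [harmonic'_add_sub]
    refine sum_congr rfl fun t _ => ?_
    push_cast
    rw [one_div, inv_pow, add_assoc]
  have h2 := two_mul_eval_hasseDeriv_two (X * ∏ x ∈ s, (X + C ((x.2 : ℚ) + 1))) (j : ℚ)
  simp only [derivative_mul, derivative_X, derivative_add, one_mul, eval_add, eval_mul,
    eval_X] at h2
  rw [eval_derivative_prod_X_add_C hz, eval_derivative_derivative_prod_X_add_C hz] at h2
  rw [hprod, hharm 1, hharm 2, eval_mul, eval_X]
  simp only [pow_one]
  linear_combination -(j : ℚ) / 2 * h2

end RisingFacProd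

theorem stmt5_general (p : ℕ) [hp : Fact p.Prime] (hodd : p ≠ 2)
    (n : ℕ) (a : Fin n → ℕ)
    (hT : ∑ i, a i ≤ 2 * (p - 1))
    (S : ℚ)
    (hS : S = ∑ j ∈ Finset.range p,
        (∏ i, risingFacQ ((j : ℚ) + 1) (a i)) *
          ((j : ℚ) * ∑ i, (harmonic' 1 (a i + j) - harmonic' 1 j)
            + (j : ℚ) ^ 2 / 2 *
              ((∑ i, (harmonic' 1 (a i + j) - harmonic' 1 j)) ^ 2
                - ∑ i, (harmonic' 2 (a i + j) - harmonic' 2 j)))) :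
    (∑ i, a i < 2 * (p - 1) → ∃ z : ℤ_[p], (S : ℚ_[p]) = (p : ℚ_[p]) * (z : ℚ_[p])) ∧
    (∑ i, a i = 2 * (p - 1) → ∃ z : ℤ_[p], (S : ℚ_[p]) + 1 = (p : ℚ_[p]) * (z : ℚ_[p])) := by
  set F := risingFacProd a ℤ
  have hF : F.natDegree = ∑ i, a i := natDegree_risingFacProd a ℤ
  set N : ℤ := ∑ j ∈ range p, (X * hasseDeriv 2 (X * F)).eval (j : ℤ)
  have hSN : S = N := by
    rw [hS, Int.cast_sum]
    refine sum_congr rfl fun j _ => ?_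
    rw [summand_eq_eval_risingFacProd, ← risingFacProd_map a (Int.castRingHom ℚ),
      ← Polynomial.map_X (Int.castRingHom ℚ), ← Polynomial.map_mul, hasseDeriv_map, ← Polynomial.map_mul, eval_natCast_map]
    rfl
  have hN : (N : ZMod p) = -F.coeff (2 * (p - 1)) :=
    sum_range_eval_X_mul_hasseDeriv_two_X_mul p hodd F (hF ▸ hT)
  refine ⟨fun hlt => ?_, fun heq => ?_⟩
  · rw [coeff_eq_zero_of_natDegree_lt (hF ▸ hlt), Int.cast_zero, neg_zero] at hN
    rw [hSN, Rat.cast_intCast]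
    exact PadicInt.exists_intCast_eq_mul_of_intCast_zmod_eq_zero N hN
  · rw [← heq, ← hF, (risingFacProd_monic a ℤ).coeff_natDegree, Int.cast_one] at hN
    have hN1 : ((N + 1 : ℤ) : ZMod p) = 0 := by push_cast; rw [hN, neg_add_cancel]
    rw [hSN, Rat.cast_intCast, ← Int.cast_one, ← Int.cast_add]
    exact PadicInt.exists_intCast_eq_mul_of_intCast_zmod_eq_zero (N + 1) hN1

/-- Lemma 3.11: for an odd prime `p` and positive integers `a₁, …, a_n` with
`T = a₁ + ⋯ + a_n ≤ 2(p-1)`, the sum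
`∑_{j=0}^{p-1} [∏ᵢ (j+1)_{aᵢ}] [j ∑ᵢ (H⁽¹⁾_{aᵢ+j} - H⁽¹⁾_j)
  + (j²/2) {(∑ᵢ (H⁽¹⁾_{aᵢ+j} - H⁽¹⁾_j))² - ∑ᵢ (H⁽²⁾_{aᵢ+j} - H⁽²⁾_j)}]`
is `≡ 0 (mod p)` if `T < 2(p-1)` and `≡ -1 (mod p)` if `T = 2(p-1)`. -/
theorem stmt5 (p : ℕ) [hp : Fact p.Prime] (hodd : p ≠ 2)
    (n : ℕ) (hn : 1 ≤ n) (a : Fin n → ℕ) (ha : ∀ i, 0 < a i)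
    (hT : ∑ i, a i ≤ 2 * (p - 1))
    (S : ℚ)
    (hS : S = ∑ j ∈ Finset.range p,
        (∏ i, risingFacQ ((j : ℚ) + 1) (a i)) *
          ((j : ℚ) * ∑ i, (harmonic' 1 (a i + j) - harmonic' 1 j)
            + (j : ℚ) ^ 2 / 2 *
              ((∑ i, (harmonic' 1 (a i + j) - harmonic' 1 j)) ^ 2
                - ∑ i, (harmonic' 2 (a i + j) - harmonic' 2 j)))) :
    (∑ i, a i < 2 * (p - 1) → ∃ z : ℤ_[p], (S : ℚ_[p]) = (p : ℚ_[p]) * (z : ℚ_[p])) ∧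
    (∑ i, a i = 2 * (p - 1) → ∃ z : ℤ_[p], (S : ℚ_[p]) + 1 = (p : ℚ_[p]) * (z : ℚ_[p])) :=
  stmt5_general p (hp := hp) hodd n a hT S hS
end

section
/- Let l, m, n be positive integers with l > m ≥ n ≥ l/2, and let c₁, c₂ ∈ ℚ. Then, as an identity of rational numbers, Σ_{k=0}^{n} C(m+k,k)·C(m,k)·C(n+k,k)·C(n,k) · { [ 1 + k·( H^{(1)}_{m+k} + H^{(1)}_{m−k} + H^{(1)}_{n+k} + H^{(1)}_{n−k} − 4·H^{(1)}_k ) ] · [ c₁·( H^{(1)}_{k+n} − H^{(1)}_{k+l−n−1} ) + c₂·( H^{(1)}_{k+m} − H^{(1)}_{k+l−m−1} ) ] − k·[ c₁·( H^{(2)}_{k+n} − H^{(2)}_{k+l−n−1} ) + c₂·( H^{(2)}_{k+m} − H^{(2)}_{k+l−m−1} ) ] } + Σ_{k=n+1}^{m} (−1)^{k−n} · C(m+k,k)·C(m,k)·C(n+k,k) / C(k−1,n) · [ c₁·( H^{(1)}_{k+n} − H^{(1)}_{k+l−n−1} ) + c₂·( H^{(1)}_{k+m} − H^{(1)}_{k+l−m−1}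 ) ] = 0. -/
open Polynomial Finset
open scoped Nat

section HermiteInterpolation

variable {K ι : Type*} [Field K]

-- the residue at `a` of `P / ((X - a) ^ 2 * Ω)`, for `Ω a ≠ 0`
noncomputable def doublePoleResidue (P Ω : K[X]) (a : K) : K :=
  ((derivative P).eval a * Ω.eval a - P.eval a * (derivative Ω).eval a) / Ω.eval a ^ 2

lemma sq_X_sub_C_dvd {f : K[X]} {a : K} (h₀ : f.eval a = 0) (h₁ : (derivative f).eval a = 0) :
    (X - C a) ^ 2 ∣ f := by
  rcases eq_or_ne f 0 with rfl | hf
  · exact dvd_zero _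
  exact (le_rootMultiplicity_iff hf).1 ((one_lt_rootMultiplicity_iff_isRoot hf).2 ⟨h₀, h₁⟩)

lemma sq_X_sub_C_dvd_sub {P F : K[X]} {a α β : K} (h₀ : P.eval a = α * F.eval a)
    (h₁ : (derivative P).eval a = α * (derivative F).eval a + β * F.eval a) :
    (X - C a) ^ 2 ∣ P - (C α * F + C β * ((X - C a) * F)) :=
  sq_X_sub_C_dvd (by simp [h₀]) (by simp [h₁, derivative_mul])

lemma eq_zero_of_hermite_conditions {x : ι → K} {s t : Finset ι} (hx : Function.Injective x)
    (hst : Disjoint s t) {R : K[X]} (hdeg : R.natDegree < 2 * #s + #t)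
    (hs : ∀ i ∈ s, (X - C (x i)) ^ 2 ∣ R) (ht : ∀ i ∈ t, X - C (x i) ∣ R) : R = 0 := by
  have hcop : ∀ i j, i ≠ j → IsCoprime (X - C (x i)) (X - C (x j)) :=
    fun i j hij => pairwise_coprime_X_sub_C hx hij
  have hS : (∏ i ∈ s, (X - C (x i))) ^ 2 ∣ R := by
    rw [← prod_pow]
    exact prod_dvd_of_coprime (fun i _ j _ hij => (hcop i j hij).pow) hs
  have hT : ∏ i ∈ t, (X - C (x i)) ∣ R :=
    prod_dvd_of_coprime (fun i _ j _ hij => hcop i j hij) ht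
  have hST : IsCoprime ((∏ i ∈ s, (X - C (x i))) ^ 2) (∏ i ∈ t, (X - C (x i))) :=
    IsCoprime.pow_left <| IsCoprime.prod_left fun i hi => IsCoprime.prod_right fun j hj =>
      hcop i j fun h => disjoint_left.1 hst hi (h ▸ hj)
  refine eq_zero_of_dvd_of_natDegree_lt (hST.mul_dvd hS hT) ?_
  rwa [((monic_prod_X_sub_C x s).pow 2).natDegree_mul (monic_prod_X_sub_C x t), natDegree_pow,
    natDegree_finsetProd_X_sub_C_eq_card, natDegree_finsetProd_X_sub_C_eq_card]

variable [DecidableEq ι] (s t : Finset ι) (x : ι → K)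

noncomputable def doubleNodeCofactor (i : ι) : K[X] :=
  (∏ j ∈ s.erase i, (X - C (x j))) ^ 2 * ∏ j ∈ t, (X - C (x j))

noncomputable def simpleNodeCofactor (i : ι) : K[X] :=
  (∏ j ∈ s, (X - C (x j))) ^ 2 * ∏ j ∈ t.erase i, (X - C (x j))

noncomputable def hermiteInterpolant (α β γ : ι → K) : K[X] :=
  ∑ i ∈ s, (C (α i) * doubleNodeCofactor s t x i
      + C (β i) * ((X - C (x i)) * doubleNodeCofactor s t x i))
    + ∑ i ∈ t, C (γ i) * simpleNodeCofactor s t x i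

variable {s t x}

lemma monic_doubleNodeCofactor (i : ι) : (doubleNodeCofactor s t x i).Monic := by
  rw [doubleNodeCofactor]
  exact ((monic_prod_X_sub_C x _).pow 2).mul (monic_prod_X_sub_C x t)

lemma monic_simpleNodeCofactor (i : ι) : (simpleNodeCofactor s t x i).Monic := by
  rw [simpleNodeCofactor]
  exact ((monic_prod_X_sub_C x s).pow 2).mul (monic_prod_X_sub_C x _)

lemma natDegree_doubleNodeCofactor {i : ι} (hi : i ∈ s) :
    (doubleNodeCofactor s t x i).natDegree + 2 = 2 * #s + #t := by
  rw [doubleNodeCofactor, ((monic_prod_X_sub_C x _).pow 2).natDegree_mul (monic_prod_X_sub_C x t),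
    natDegree_pow, natDegree_finsetProd_X_sub_C_eq_card, natDegree_finsetProd_X_sub_C_eq_card,
    card_erase_of_mem hi]
  have := card_pos.2 ⟨i, hi⟩
  omega

lemma natDegree_simpleNodeCofactor {i : ι} (hi : i ∈ t) :
    (simpleNodeCofactor s t x i).natDegree + 1 = 2 * #s + #t := by
  rw [simpleNodeCofactor, ((monic_prod_X_sub_C x s).pow 2).natDegree_mul (monic_prod_X_sub_C x _),
    natDegree_pow, natDegree_finsetProd_X_sub_C_eq_card, natDegree_finsetProd_X_sub_C_eq_card,
    card_erase_of_mem hi]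
  have := card_pos.2 ⟨i, hi⟩
  omega

lemma sq_dvd_doubleNodeCofactor {i j : ι} (hi : i ∈ s) (hij : i ≠ j) :
    (X - C (x i)) ^ 2 ∣ doubleNodeCofactor s t x j := by
  rw [doubleNodeCofactor]
  exact dvd_mul_of_dvd_left
    (pow_dvd_pow_of_dvd (dvd_prod_of_mem (fun j => X - C (x j)) (mem_erase.2 ⟨hij, hi⟩)) 2) _

lemma sq_dvd_simpleNodeCofactor {i : ι} (hi : i ∈ s) (j : ι) :
    (X - C (x i)) ^ 2 ∣ simpleNodeCofactor s t x j := by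
  rw [simpleNodeCofactor]
  exact dvd_mul_of_dvd_left (pow_dvd_pow_of_dvd (dvd_prod_of_mem (fun j => X - C (x j)) hi) 2) _

lemma dvd_doubleNodeCofactor {i : ι} (hi : i ∈ t) (j : ι) :
    X - C (x i) ∣ doubleNodeCofactor s t x j := by
  rw [doubleNodeCofactor]
  exact dvd_mul_of_dvd_right (dvd_prod_of_mem (fun j => X - C (x j)) hi) _

lemma dvd_simpleNodeCofactor {i j : ι} (hi : i ∈ t) (hij : i ≠ j) :
    X - C (x i) ∣ simpleNodeCofactor s t x j := by
  rw [simpleNodeCofactor]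
  exact dvd_mul_of_dvd_right (dvd_prod_of_mem (fun j => X - C (x j)) (mem_erase.2 ⟨hij, hi⟩)) _

lemma eval_doubleNodeCofactor_ne_zero (hx : Function.Injective x) (hst : Disjoint s t) {i : ι}
    (hi : i ∈ s) : (doubleNodeCofactor s t x i).eval (x i) ≠ 0 := by
  simp only [doubleNodeCofactor, eval_mul, eval_prod, eval_pow, eval_sub, eval_X, eval_C]
  refine mul_ne_zero (pow_ne_zero _ (prod_ne_zero_iff.2 fun j hj => ?_))
    (prod_ne_zero_iff.2 fun j hj => ?_)
  · exact sub_ne_zero.2 (hx.ne (ne_of_mem_erase hj).symm)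
  · exact sub_ne_zero.2 (hx.ne fun h => disjoint_left.1 hst hi (h ▸ hj))

lemma eval_simpleNodeCofactor_ne_zero (hx : Function.Injective x) (hst : Disjoint s t) {i : ι}
    (hi : i ∈ t) : (simpleNodeCofactor s t x i).eval (x i) ≠ 0 := by
  simp only [simpleNodeCofactor, eval_mul, eval_prod, eval_pow, eval_sub, eval_X, eval_C]
  refine mul_ne_zero (pow_ne_zero _ (prod_ne_zero_iff.2 fun j hj => ?_))
    (prod_ne_zero_iff.2 fun j hj => ?_)
  · exact sub_ne_zero.2 (hx.ne fun h => disjoint_left.1 hst hj (h ▸ hi))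
  · exact sub_ne_zero.2 (hx.ne (ne_of_mem_erase hj).symm)

lemma natDegree_hermiteInterpolant_le (α β γ : ι → K) :
    (hermiteInterpolant s t x α β γ).natDegree ≤ 2 * #s + #t - 1 := by
  refine (natDegree_add_le _ _).trans (max_le (natDegree_sum_le_of_forall_le _ _ fun i hi => ?_)
    (natDegree_sum_le_of_forall_le _ _ fun i hi => ?_))
  · have h := natDegree_doubleNodeCofactor (t := t) (x := x) hi
    refine (natDegree_add_le _ _).trans (max_le ((natDegree_C_mul_le _ _).trans (by omega))
      ((natDegree_C_mul_le _ _).trans ?_))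
    rw [(monic_X_sub_C _).natDegree_mul (monic_doubleNodeCofactor i), natDegree_X_sub_C]
    omega
  · have h := natDegree_simpleNodeCofactor (s := s) (x := x) hi
    exact (natDegree_C_mul_le _ _).trans (by omega)

lemma coeff_hermiteInterpolant (α β γ : ι → K) :
    (hermiteInterpolant s t x α β γ).coeff (2 * #s + #t - 1) = ∑ i ∈ s, β i + ∑ i ∈ t, γ i := by
  simp only [hermiteInterpolant, coeff_add, finsetSum_coeff, coeff_C_mul]
  congr 1
  · refine sum_congr rfl fun i hi => ?_
    have h := natDegree_doubleNodeCofactor (t := t) (x := x) hi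
    have hdeg : ((X - C (x i)) * doubleNodeCofactor s t x i).natDegree = 2 * #s + #t - 1 := by
      rw [(monic_X_sub_C _).natDegree_mul (monic_doubleNodeCofactor i), natDegree_X_sub_C]
      omega
    rw [coeff_eq_zero_of_natDegree_lt (by omega), ← hdeg,
      ((monic_X_sub_C _).mul (monic_doubleNodeCofactor i)).coeff_natDegree]
    ring
  · refine sum_congr rfl fun i hi => ?_
    have h := natDegree_simpleNodeCofactor (s := s) (x := x) hi
    rw [show 2 * #s + #t - 1 = (simpleNodeCofactor s t x i).natDegree by omega,
      (monic_simpleNodeCofactor i).coeff_natDegree, mul_one]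

lemma sq_dvd_sub_hermiteInterpolant {P : K[X]} {α β γ : ι → K} {i : ι} (hi : i ∈ s)
    (h₀ : P.eval (x i) = α i * (doubleNodeCofactor s t x i).eval (x i))
    (h₁ : (derivative P).eval (x i) = α i * (derivative (doubleNodeCofactor s t x i)).eval (x i)
      + β i * (doubleNodeCofactor s t x i).eval (x i)) :
    (X - C (x i)) ^ 2 ∣ P - hermiteInterpolant s t x α β γ := by
  rw [hermiteInterpolant, ← add_sum_erase s _ hi, add_assoc, ← sub_sub]
  refine dvd_sub (sq_X_sub_C_dvd_sub h₀ h₁) (dvd_add (dvd_sum fun j hj => ?_)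
    (dvd_sum fun j _ => dvd_mul_of_dvd_right (sq_dvd_simpleNodeCofactor hi j) _))
  have hΩ := sq_dvd_doubleNodeCofactor (t := t) (x := x) hi (ne_of_mem_erase hj).symm
  exact dvd_add (dvd_mul_of_dvd_right hΩ _) (dvd_mul_of_dvd_right (dvd_mul_of_dvd_right hΩ _) _)

lemma dvd_sub_hermiteInterpolant {P : K[X]} {α β γ : ι → K} {i : ι} (hi : i ∈ t)
    (h : P.eval (x i) = γ i * (simpleNodeCofactor s t x i).eval (x i)) :
    X - C (x i) ∣ P - hermiteInterpolant s t x α β γ := by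
  rw [hermiteInterpolant, ← add_sum_erase t _ hi, ← add_assoc, add_comm _ (C (γ i) * _), add_assoc,
    ← sub_sub]
  refine dvd_sub (dvd_iff_isRoot.2 (by simp [h])) (dvd_add (dvd_sum fun j _ => ?_)
    (dvd_sum fun j hj =>
      dvd_mul_of_dvd_right (dvd_simpleNodeCofactor hi (ne_of_mem_erase hj).symm) _))
  have hΩ := dvd_doubleNodeCofactor (s := s) (x := x) hi j
  exact dvd_add (dvd_mul_of_dvd_right hΩ _) (dvd_mul_of_dvd_right (dvd_mul_of_dvd_right hΩ _) _)

-- The residues of `P / (∏ₛ (X - xᵢ)² ∏ₜ (X - xᵢ))` sum to zero: `P` is its own Hermite interpolant,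
-- whose coefficient of `X ^ (2 * #s + #t - 1)` is that sum.
theorem sum_doublePoleResidue_add_sum_eq_zero (hx : Function.Injective x) (hst : Disjoint s t)
    {P : K[X]} (hP : P.natDegree + 2 ≤ 2 * #s + #t) :
    ∑ i ∈ s, doublePoleResidue P (doubleNodeCofactor s t x i) (x i)
      + ∑ i ∈ t, P.eval (x i) / (simpleNodeCofactor s t x i).eval (x i) = 0 := by
  set α : ι → K := fun i => P.eval (x i) / (doubleNodeCofactor s t x i).eval (x i)
  set β : ι → K := fun i => doublePoleResidue P (doubleNodeCofactor s t x i) (x i)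
  set γ : ι → K := fun i => P.eval (x i) / (simpleNodeCofactor s t x i).eval (x i)
  have hPH : P = hermiteInterpolant s t x α β γ := by
    refine sub_eq_zero.1 (eq_zero_of_hermite_conditions hx hst ?_ (fun i hi => ?_) (fun i hi => ?_))
    · have := natDegree_hermiteInterpolant_le (s := s) (t := t) (x := x) α β γ
      exact (natDegree_sub_le _ _).trans_lt (max_lt (by omega) (by omega))
    · have hΩ := eval_doubleNodeCofactor_ne_zero hx hst hi
      refine sq_dvd_sub_hermiteInterpolant hi (by simp [α, hΩ]) ?_
      simp only [α, β, doublePoleResidue]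
      field_simp
      ring
    · exact dvd_sub_hermiteInterpolant hi (by simp [γ, eval_simpleNodeCofactor_ne_zero hx hst hi])
  have h := congrArg (coeff · (2 * #s + #t - 1)) hPH
  simp only [coeff_hermiteInterpolant] at h
  rw [coeff_eq_zero_of_natDegree_lt (by omega)] at h
  exact h.symm

end HermiteInterpolation

section LogDeriv

variable {K ι : Type*} [Field K]

noncomputable def logDerivAt (f : K[X]) (a : K) : K := (derivative f).eval a / f.eval a

variable {f g : K[X]} {a : K}

lemma logDerivAt_mul (hf : f.eval a ≠ 0) (hg : g.eval a ≠ 0) :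
    logDerivAt (f * g) a = logDerivAt f a + logDerivAt g a := by
  simp only [logDerivAt, derivative_mul, eval_add, eval_mul]
  field_simp

lemma logDerivAt_sq (hf : f.eval a ≠ 0) : logDerivAt (f ^ 2) a = 2 * logDerivAt f a := by
  rw [sq, logDerivAt_mul hf hf, two_mul]

lemma logDerivAt_prod (S : Finset ι) (F : ι → K[X]) (hF : ∀ i ∈ S, (F i).eval a ≠ 0) :
    logDerivAt (∏ i ∈ S, F i) a = ∑ i ∈ S, logDerivAt (F i) a := by
  classical
  induction S using Finset.induction_on with
  | empty => simp [logDerivAt]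
  | insert i S hi ih =>
    rw [prod_insert hi, sum_insert hi, logDerivAt_mul (hF i (mem_insert_self i S)),
      ih fun j hj => hF j (mem_insert_of_mem hj)]
    rw [eval_prod]
    exact prod_ne_zero_iff.2 fun j hj => hF j (mem_insert_of_mem hj)

lemma logDerivAt_X_add_C (r : K) : logDerivAt (X + C r) a = 1 / (a + r) := by
  simp [logDerivAt]

lemma logDerivAt_X_sub_C (r : K) : logDerivAt (X - C r) a = 1 / (a - r) := by
  simp [logDerivAt]

lemma doublePoleResidue_X_mul {U Ω : K[X]} (hU : U.eval a ≠ 0) (hΩ : Ω.eval a ≠ 0) :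
    doublePoleResidue (X * U) Ω a
      = U.eval a / Ω.eval a * (1 + a * (logDerivAt U a - logDerivAt Ω a)) := by
  simp only [doublePoleResidue, logDerivAt, derivative_mul, derivative_X, one_mul, eval_add,
    eval_mul, eval_X]
  field_simp
  ring

lemma logDerivAt_doubleNodeCofactor [DecidableEq ι] {s t : Finset ι} {x : ι → K}
    (hx : Function.Injective x) (hst : Disjoint s t) {i : ι} (hi : i ∈ s) :
    logDerivAt (doubleNodeCofactor s t x i) (x i)
      = 2 * ∑ j ∈ s.erase i, 1 / (x i - x j) + ∑ j ∈ t, 1 / (x i - x j) := by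
  have h := eval_doubleNodeCofactor_ne_zero hx hst hi
  rw [doubleNodeCofactor, eval_mul] at h
  rw [doubleNodeCofactor]
  obtain ⟨hs, ht⟩ := mul_ne_zero_iff.1 h
  have hs' : (∏ j ∈ s.erase i, (X - C (x j))).eval (x i) ≠ 0 := by
    rw [eval_pow] at hs
    exact pow_ne_zero_iff two_ne_zero |>.1 hs
  rw [logDerivAt_mul hs ht, logDerivAt_sq hs',
    logDerivAt_prod _ _ (prod_ne_zero_iff.1 (by rwa [eval_prod] at hs')),
    logDerivAt_prod _ _ (prod_ne_zero_iff.1 (by rwa [eval_prod] at ht))]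
  simp only [logDerivAt_X_sub_C]

end LogDeriv

section IntervalSums

lemma harmonic'_succ (p n : ℕ) : harmonic' p (n + 1) = harmonic' p n + 1 / ((n : ℚ) + 1) ^ p := by
  rw [harmonic', harmonic', sum_Icc_succ_top (by omega)]
  push_cast
  rfl

lemma harmonic'_zero (p : ℕ) : harmonic' p 0 = 0 := rfl

variable {k a b : ℕ}

lemma sum_Ioc_inv_add_pow (p : ℕ) (hab : a ≤ b) :
    ∑ i ∈ Ioc a b, 1 / ((k : ℚ) + i) ^ p = harmonic' p (k + b) - harmonic' p (k + a) := by
  induction b, hab using Nat.le_induction with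
  | base => simp
  | succ b _ ih =>
    rw [sum_Ioc_succ_top (by omega), ih, ← add_assoc, harmonic'_succ]
    push_cast
    ring

lemma prod_Ioc_add (hab : a ≤ b) :
    ∏ i ∈ Ioc a b, ((k : ℚ) + i) = (k + b)! / (k + a)! := by
  induction b, hab using Nat.le_induction with
  | base => rw [Ioc_self, prod_empty, div_self (by positivity)]
  | succ b _ ih =>
    rw [prod_Ioc_succ_top (by omega), ih, ← add_assoc, Nat.factorial_succ]
    push_cast
    field_simp
    ring

lemma sum_Ioc_inv_sub (hka : k ≤ a) (hab : a ≤ b) :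
    ∑ i ∈ Ioc a b, 1 / ((i : ℚ) - k) = harmonic' 1 (b - k) - harmonic' 1 (a - k) := by
  induction b, hab using Nat.le_induction with
  | base => simp
  | succ b _ ih =>
    rw [sum_Ioc_succ_top (by omega), ih, show b + 1 - k = b - k + 1 by omega, harmonic'_succ]
    push_cast [Nat.cast_sub (show k ≤ b by omega)]
    ring

lemma prod_Ioc_sub (hka : k ≤ a) (hab : a ≤ b) :
    ∏ i ∈ Ioc a b, ((i : ℚ) - k) = (b - k)! / (a - k)! := by
  induction b, hab using Nat.le_induction with
  | base => rw [Ioc_self, prod_empty, div_self (by positivity)]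
  | succ b _ ih =>
    rw [prod_Ioc_succ_top (by omega), ih, show b + 1 - k = b - k + 1 by omega, Nat.factorial_succ]
    push_cast [Nat.cast_sub (show k ≤ b by omega)]
    field_simp
    ring

lemma sum_Ico_inv_sub (hab : a ≤ b) (hbk : b ≤ k) :
    ∑ i ∈ Ico a b, 1 / ((k : ℚ) - i) = harmonic' 1 (k - a) - harmonic' 1 (k - b) := by
  induction b, hab using Nat.le_induction with
  | base => simp
  | succ b _ ih =>
    rw [sum_Ico_succ_top (by omega), ih (by omega), show k - b = k - (b + 1) + 1 by omega,
      harmonic'_succ]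
    push_cast [Nat.cast_sub hbk]
    ring

lemma prod_Ico_sub (hab : a ≤ b) (hbk : b ≤ k) :
    ∏ i ∈ Ico a b, ((k : ℚ) - i) = (k - a)! / (k - b)! := by
  induction b, hab using Nat.le_induction with
  | base => rw [Ico_self, prod_empty, div_self (by positivity)]
  | succ b _ ih =>
    rw [prod_Ico_succ_top (by omega), ih (by omega), show k - b = k - (b + 1) + 1 by omega,
      Nat.factorial_succ]
    have hkb : ((k - (b + 1) : ℕ) : ℚ) + 1 ≠ 0 := by positivity
    push_cast [Nat.cast_sub hbk] at hkb ⊢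
    field_simp
    ring

lemma prod_Ioc_sub_rev (hka : k ≤ a) (hab : a ≤ b) :
    ∏ i ∈ Ioc a b, ((k : ℚ) - i) = (-1) ^ (b - a) * ((b - k)! / (a - k)!) := by
  rw [← Nat.card_Ioc a b, ← prod_Ioc_sub hka hab, ← prod_neg]
  exact prod_congr rfl fun _ _ => (neg_sub _ _).symm

lemma sum_Ioc_inv_sub_rev (hka : k ≤ a) (hab : a ≤ b) :
    ∑ i ∈ Ioc a b, 1 / ((k : ℚ) - i) = harmonic' 1 (a - k) - harmonic' 1 (b - k) := by
  rw [← neg_sub, ← sum_Ioc_inv_sub hka hab, ← sum_neg_distrib]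
  exact sum_congr rfl fun _ _ => by rw [← neg_sub, one_div_neg_eq_neg_one_div]

end IntervalSums

section PartialFraction

variable {m n j k : ℕ}

lemma disjoint_range_Icc (m n : ℕ) : Disjoint (range (n + 1)) (Icc (n + 1) m) := by
  simp [disjoint_left]; omega

lemma range_succ_erase (hk : k ≤ n) : (range (n + 1)).erase k = Ico 0 k ∪ Ioc k n := by
  ext i; simp; omega

lemma Icc_succ_erase (hnk : n < k) (hkm : k ≤ m) :
    (Icc (n + 1) m).erase k = Ico (n + 1) k ∪ Ioc k m := by
  ext i; simp; omega

noncomputable def pochhammerErase (m n j : ℕ) : ℚ[X] :=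
  (∏ i ∈ (Ioc 0 m).erase j, (X + C (i : ℚ))) * ∏ i ∈ Ioc 0 n, (X + C (i : ℚ))

lemma natDegree_pochhammerErase (hj : j ∈ Ioc 0 m) :
    (pochhammerErase m n j).natDegree = m - 1 + n := by
  have hmonic : ∀ S : Finset ℕ, (∏ i ∈ S, (X + C (i : ℚ))).Monic :=
    fun S => monic_prod_of_monic _ _ fun i _ => monic_X_add_C _
  rw [pochhammerErase, (hmonic _).natDegree_mul (hmonic _),
    natDegree_prod_of_monic _ _ fun i _ => monic_X_add_C _,
    natDegree_prod_of_monic _ _ fun i _ => monic_X_add_C _]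
  simp only [natDegree_X_add_C, sum_const, smul_eq_mul, mul_one, card_erase_of_mem hj,
    Nat.card_Ioc, Nat.sub_zero]

lemma eval_pochhammerErase (hj : j ∈ Ioc 0 m) (k : ℕ) :
    (pochhammerErase m n j).eval (k : ℚ) = (k + m)! / k ! / (k + j) * ((k + n)! / k !) := by
  have hm := prod_Ioc_add (k := k) (Nat.zero_le m)
  rw [← prod_erase_mul _ _ hj] at hm
  simp only [pochhammerErase, eval_mul, eval_prod, eval_add, eval_X, eval_C]
  have hj₀ : (0 : ℚ) < j := by exact_mod_cast (mem_Ioc.1 hj).1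
  rw [eq_div_of_mul_eq (by positivity) hm, prod_Ioc_add (Nat.zero_le n), add_zero]

lemma logDerivAt_pochhammerErase (hj : j ∈ Ioc 0 m) (k : ℕ) :
    logDerivAt (pochhammerErase m n j) (k : ℚ)
      = (harmonic' 1 (k + m) - harmonic' 1 k - 1 / (k + j))
        + (harmonic' 1 (k + n) - harmonic' 1 k) := by
  have hpos : ∀ c : ℕ, ∀ i ∈ Ioc 0 c, (X + C (i : ℚ)).eval (k : ℚ) ≠ 0 := fun c i hi => by
    have : (0 : ℚ) < i := by exact_mod_cast (mem_Ioc.1 hi).1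
    simp only [eval_add, eval_X, eval_C]
    positivity
  have hm : ∀ i ∈ (Ioc 0 m).erase j, (X + C (i : ℚ)).eval (k : ℚ) ≠ 0 :=
    fun i hi => hpos m i (mem_of_mem_erase hi)
  rw [pochhammerErase, logDerivAt_mul (by rw [eval_prod]; exact prod_ne_zero_iff.2 hm)
      (by rw [eval_prod]; exact prod_ne_zero_iff.2 (hpos n)),
    logDerivAt_prod _ _ hm, logDerivAt_prod _ _ (hpos n)]
  simp only [logDerivAt_X_add_C]
  rw [sum_erase_eq_sub hj]
  have hH : ∀ c : ℕ, ∑ i ∈ Ioc 0 c, 1 / ((k : ℚ) + i) = harmonic' 1 (k + c) - harmonic' 1 k := by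
    intro c
    simpa using sum_Ioc_inv_add_pow (k := k) 1 (Nat.zero_le c)
  rw [hH, hH]

lemma eval_doubleNodeCofactor_nat (hk : k ≤ n) (hnm : n ≤ m) :
    (doubleNodeCofactor (range (n + 1)) (Icc (n + 1) m) (Nat.cast : ℕ → ℚ) k).eval (k : ℚ)
      = (k ! * (n - k)!) ^ 2 * ((-1) ^ (m - n) * ((m - k)! / (n - k)!)) := by
  simp only [doubleNodeCofactor, eval_mul, eval_pow, eval_prod, eval_sub, eval_X, eval_C]
  rw [range_succ_erase hk, prod_union (by simp [disjoint_left]; omega), Icc_add_one_left_eq_Ioc,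
    prod_Ico_sub (Nat.zero_le k) le_rfl, prod_Ioc_sub_rev le_rfl hk, prod_Ioc_sub_rev hk hnm]
  have hsign : ((-1 : ℚ) ^ (n - k)) ^ 2 = 1 := by rw [← pow_mul, pow_mul', neg_one_sq, one_pow]
  simp only [Nat.sub_zero, Nat.sub_self, Nat.factorial_zero, Nat.cast_one, div_one, mul_pow, hsign]
  ring

lemma logDerivAt_doubleNodeCofactor_nat (hk : k ≤ n) (hnm : n ≤ m) :
    logDerivAt (doubleNodeCofactor (range (n + 1)) (Icc (n + 1) m) (Nat.cast : ℕ → ℚ) k) (k : ℚ)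
      = 2 * (harmonic' 1 k - harmonic' 1 (n - k))
        + (harmonic' 1 (n - k) - harmonic' 1 (m - k)) := by
  rw [logDerivAt_doubleNodeCofactor Nat.cast_injective (disjoint_range_Icc m n)
      (mem_range.2 (by omega)),
    range_succ_erase hk, sum_union (by simp [disjoint_left]; omega), Icc_add_one_left_eq_Ioc,
    sum_Ico_inv_sub (Nat.zero_le k) le_rfl, sum_Ioc_inv_sub_rev le_rfl hk,
    sum_Ioc_inv_sub_rev hk hnm]
  simp only [Nat.sub_zero, Nat.sub_self, harmonic'_zero]
  ring

lemma eval_simpleNodeCofactor_nat (hnk : n < k) (hkm : k ≤ m) :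
    (simpleNodeCofactor (range (n + 1)) (Icc (n + 1) m) (Nat.cast : ℕ → ℚ) k).eval (k : ℚ)
      = (k ! / (k - (n + 1))!) ^ 2 * ((-1) ^ (m - k) * ((k - (n + 1))! * (m - k)!)) := by
  simp only [simpleNodeCofactor, eval_mul, eval_pow, eval_prod, eval_sub, eval_X, eval_C]
  have hnk' : n + 1 ≤ k := hnk
  rw [range_eq_Ico, Icc_succ_erase hnk hkm, prod_union (by simp [disjoint_left]; omega),
    prod_Ico_sub (Nat.zero_le _) hnk', prod_Ico_sub hnk' le_rfl, prod_Ioc_sub_rev le_rfl hkm]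
  simp only [Nat.sub_zero, Nat.sub_self, Nat.factorial_zero, Nat.cast_one, div_one]
  ring

lemma doublePoleResidue_pochhammerErase (hj : j ∈ Ioc 0 m) (hk : k ≤ n) (hnm : n ≤ m) :
    doublePoleResidue (X * pochhammerErase m n j)
        (doubleNodeCofactor (range (n + 1)) (Icc (n + 1) m) (Nat.cast : ℕ → ℚ) k) (k : ℚ)
      = (-1) ^ (m - n) * ((((m + k).choose k : ℚ) * (m.choose k : ℚ) * ((n + k).choose k : ℚ) *
            (n.choose k : ℚ)) *
          ((1 + (k : ℚ) * (harmonic' 1 (m + k) + harmonic' 1 (m - k) + harmonic' 1 (n + k)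
                + harmonic' 1 (n - k) - 4 * harmonic' 1 k)) * (1 / ((k : ℚ) + j))
            - (k : ℚ) * (1 / ((k : ℚ) + j) ^ 2))) := by
  have hj₀ : (0 : ℚ) < j := by exact_mod_cast (mem_Ioc.1 hj).1
  have hU : (pochhammerErase m n j).eval (k : ℚ) ≠ 0 := by
    rw [eval_pochhammerErase hj]; positivity
  have hΩ := eval_doubleNodeCofactor_ne_zero (Nat.cast_injective (R := ℚ)) (disjoint_range_Icc m n)
    (mem_range.2 (Nat.lt_succ_of_le hk))
  rw [doublePoleResidue_X_mul hU hΩ, eval_pochhammerErase hj, eval_doubleNodeCofactor_nat hk hnm,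
    logDerivAt_pochhammerErase hj, logDerivAt_doubleNodeCofactor_nat hk hnm,
    Nat.cast_choose ℚ (Nat.le_add_left k m), Nat.cast_choose ℚ (hk.trans hnm),
    Nat.cast_choose ℚ (Nat.le_add_left k n), Nat.cast_choose ℚ hk, Nat.add_sub_cancel,
    Nat.add_sub_cancel, add_comm k m, add_comm k n]
  rcases neg_one_pow_eq_or ℚ (m - n) with h | h <;> rw [h] <;> field_simp <;> ring

lemma eval_div_simpleNodeCofactor_pochhammerErase (hj : j ∈ Ioc 0 m) (hnk : n < k) (hkm : k ≤ m) :
    (X * pochhammerErase m n j).eval (k : ℚ)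
        / (simpleNodeCofactor (range (n + 1)) (Icc (n + 1) m) (Nat.cast : ℕ → ℚ) k).eval (k : ℚ)
      = (-1) ^ (m - n) * ((-1 : ℚ) ^ (k - n) *
          (((m + k).choose k : ℚ) * (m.choose k : ℚ) * ((n + k).choose k : ℚ)) /
            (((k - 1).choose n : ℚ)) * (1 / ((k : ℚ) + j))) := by
  have hj₀ : (0 : ℚ) < j := by exact_mod_cast (mem_Ioc.1 hj).1
  rw [eval_mul, eval_X, eval_pochhammerErase hj, eval_simpleNodeCofactor_nat hnk hkm,
    Nat.cast_choose ℚ (Nat.le_add_left k m), Nat.cast_choose ℚ hkm,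
    Nat.cast_choose ℚ (Nat.le_add_left k n), Nat.cast_choose ℚ (Nat.le_sub_one_of_lt hnk),
    Nat.add_sub_cancel, Nat.add_sub_cancel, add_comm k m, add_comm k n,
    show k - 1 - n = k - (n + 1) by omega, ← Nat.mul_factorial_pred (show k ≠ 0 by omega),
    show m - n = m - k + (k - n) by omega, pow_add]
  push_cast
  rcases neg_one_pow_eq_or ℚ (m - k) with h | h <;>
    rcases neg_one_pow_eq_or ℚ (k - n) with h' | h' <;> rw [h, h'] <;> field_simp

end PartialFraction

section ResidueForm

variable {m n j l b : ℕ}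

-- the left-hand side of the identity, with its two brackets as arguments
noncomputable def residueForm (m n : ℕ) : (ℕ → ℚ) × (ℕ → ℚ) →ₗ[ℚ] ℚ where
  toFun φψ :=
    ∑ k ∈ Finset.range (n + 1),
        (((m + k).choose k : ℚ) * (m.choose k : ℚ) * ((n + k).choose k : ℚ) *
            (n.choose k : ℚ)) *
          ((1 + (k : ℚ) * (harmonic' 1 (m + k) + harmonic' 1 (m - k) + harmonic' 1 (n + k)
                + harmonic' 1 (n - k) - 4 * harmonic' 1 k)) * φψ.1 k
            - (k : ℚ) * φψ.2 k)
      + ∑ k ∈ Finset.Icc (n + 1) m,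
          (-1 : ℚ) ^ (k - n) *
            (((m + k).choose k : ℚ) * (m.choose k : ℚ) * ((n + k).choose k : ℚ)) /
              (((k - 1).choose n : ℚ)) * φψ.1 k
  map_add' φψ φψ' := by
    simp only [Prod.fst_add, Prod.snd_add, Pi.add_apply]
    rw [add_add_add_comm, ← sum_add_distrib, ← sum_add_distrib]
    congr 1 <;> exact sum_congr rfl fun k _ => by ring
  map_smul' c φψ := by
    simp only [Prod.smul_fst, Prod.smul_snd, Pi.smul_apply, smul_eq_mul, RingHom.id_apply]
    rw [mul_add, mul_sum, mul_sum]
    congr 1 <;> exact sum_congr rfl fun k _ => by ring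

lemma residueForm_inv_add (hj : j ∈ Ioc 0 m) (hnm : n ≤ m) :
    residueForm m n (fun k => 1 / ((k : ℚ) + j), fun k => 1 / ((k : ℚ) + j) ^ 2) = 0 := by
  have hdeg : (X * pochhammerErase m n j).natDegree + 2
      ≤ 2 * #(range (n + 1)) + #(Icc (n + 1) m) := by
    have := mem_Ioc.1 hj
    have := natDegree_mul_le (p := X) (q := pochhammerErase m n j)
    rw [natDegree_X, natDegree_pochhammerErase hj] at this
    simp only [card_range, Nat.card_Icc]
    omega
  have h := sum_doublePoleResidue_add_sum_eq_zero (Nat.cast_injective (R := ℚ))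
    (disjoint_range_Icc m n) hdeg
  rw [sum_congr rfl fun k hk => doublePoleResidue_pochhammerErase hj
      (Nat.lt_succ_iff.1 (mem_range.1 hk)) hnm,
    sum_congr rfl fun k hk => eval_div_simpleNodeCofactor_pochhammerErase hj
      (mem_Icc.1 hk).1 (mem_Icc.1 hk).2, ← mul_sum, ← mul_sum, ← mul_add] at h
  exact (mul_eq_zero.1 h).resolve_left (pow_ne_zero _ (neg_ne_zero.2 one_ne_zero))


def harmonicGap (p b l k : ℕ) : ℚ := harmonic' p (k + b) - harmonic' p (k + l - b - 1)

lemma harmonicGap_eq_sum (p k : ℕ) (hbl : b < l) (hlb : l ≤ 2 * b + 1) :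
    harmonicGap p b l k = ∑ j ∈ Ioc (l - b - 1) b, 1 / ((k : ℚ) + j) ^ p := by
  rw [harmonicGap, sum_Ioc_inv_add_pow p (by omega), show k + l - b - 1 = k + (l - b - 1) by omega]

lemma residueForm_harmonicGap (hbl : b < l) (hlb : l ≤ 2 * b + 1) (hbm : b ≤ m) (hnm : n ≤ m) :
    residueForm m n (harmonicGap 1 b l, harmonicGap 2 b l) = 0 := by
  have hpair : (harmonicGap 1 b l, harmonicGap 2 b l)
      = ∑ j ∈ Ioc (l - b - 1) b,
          ((fun k : ℕ => 1 / ((k : ℚ) + j)), fun k : ℕ => 1 / ((k : ℚ) + j) ^ 2) := by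
    ext k <;> simp [harmonicGap_eq_sum _ k hbl hlb, Prod.fst_sum, Prod.snd_sum, Finset.sum_apply]
  rw [hpair, map_sum]
  exact sum_eq_zero fun j hj =>
    residueForm_inv_add (by simp only [mem_Ioc] at hj ⊢; omega) hnm

end ResidueForm

theorem stmt7_general (l m n : ℕ) (hml : m < l) (hnm : n ≤ m) (hln : l ≤ 2 * n)
    (c₁ c₂ : ℚ) :
    ∑ k ∈ Finset.range (n + 1),
        (((m + k).choose k : ℚ) * (m.choose k : ℚ) * ((n + k).choose k : ℚ) *
            (n.choose k : ℚ)) *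
          ((1 + (k : ℚ) * (harmonic' 1 (m + k) + harmonic' 1 (m - k) + harmonic' 1 (n + k)
                + harmonic' 1 (n - k) - 4 * harmonic' 1 k)) *
              (c₁ * (harmonic' 1 (k + n) - harmonic' 1 (k + l - n - 1))
                + c₂ * (harmonic' 1 (k + m) - harmonic' 1 (k + l - m - 1)))
            - (k : ℚ) *
              (c₁ * (harmonic' 2 (k + n) - harmonic' 2 (k + l - n - 1))
                + c₂ * (harmonic' 2 (k + m) - harmonic' 2 (k + l - m - 1))))
      + ∑ k ∈ Finset.Icc (n + 1) m,
          (-1 : ℚ) ^ (k - n) *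
            (((m + k).choose k : ℚ) * (m.choose k : ℚ) * ((n + k).choose k : ℚ)) /
              (((k - 1).choose n : ℚ)) *
            (c₁ * (harmonic' 1 (k + n) - harmonic' 1 (k + l - n - 1))
              + c₂ * (harmonic' 1 (k + m) - harmonic' 1 (k + l - m - 1)))
      = 0 := by
  have key : residueForm m n
      (c₁ • (harmonicGap 1 n l, harmonicGap 2 n l) + c₂ • (harmonicGap 1 m l, harmonicGap 2 m l))
      = 0 := by
    rw [map_add, map_smul, map_smul, residueForm_harmonicGap (by omega) (by omega) hnm hnm,
      residueForm_harmonicGap hml (by omega) le_rfl hnm, smul_zero, smul_zero, add_zero]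
  -- the goal is `key` with `residueForm` and the linear operations unfolded
  exact key

/-- Theorem 3.13 (binomial coefficient–harmonic sum identity): for positive integers
`l > m ≥ n ≥ l/2` and rational constants `c₁, c₂`, a certain combination of binomial
coefficients and generalized harmonic sums vanishes. -/
theorem stmt7 (l m n : ℕ) (hl : 0 < n) (hml : m < l) (hnm : n ≤ m) (hln : l ≤ 2 * n)
    (c₁ c₂ : ℚ) :
    ∑ k ∈ Finset.range (n + 1),
        (((m + k).choose k : ℚ) * (m.choose k : ℚ) * ((n + k).choose k : ℚ) *
            (n.choose k : ℚ)) *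
          ((1 + (k : ℚ) * (harmonic' 1 (m + k) + harmonic' 1 (m - k) + harmonic' 1 (n + k)
                + harmonic' 1 (n - k) - 4 * harmonic' 1 k)) *
              (c₁ * (harmonic' 1 (k + n) - harmonic' 1 (k + l - n - 1))
                + c₂ * (harmonic' 1 (k + m) - harmonic' 1 (k + l - m - 1)))
            - (k : ℚ) *
              (c₁ * (harmonic' 2 (k + n) - harmonic' 2 (k + l - n - 1))
                + c₂ * (harmonic' 2 (k + m) - harmonic' 2 (k + l - m - 1))))
      + ∑ k ∈ Finset.Icc (n + 1) m,
          (-1 : ℚ) ^ (k - n) *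
            (((m + k).choose k : ℚ) * (m.choose k : ℚ) * ((n + k).choose k : ℚ)) /
              (((k - 1).choose n : ℚ)) *
            (c₁ * (harmonic' 1 (k + n) - harmonic' 1 (k + l - n - 1))
              + c₂ * (harmonic' 1 (k + m) - harmonic' 1 (k + l - m - 1)))
      = 0 :=
  stmt7_general l m n hml hnm hln c₁ c₂
end
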